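/- Let d, g : ℂ → ℂ be functions and let 𝓕ₙ be the associated generalized Fibonacci polynomials of Fibonacci type over ℂ. If r, s ∈ ℂ satisfy s ≠ 0 and s² = g(r), then for every integer n ≥ 1, 𝓕ₙ(r) = s^{n−1} · Fₙ(d(r)/s), where Fₙ is the classical Fibonacci polynomial. -/

import Mathlib

/-- Generalized Fibonacci polynomials of Fibonacci type over `ℂ`:
`𝓕₀ = 0`, `𝓕₁ = 1`, `𝓕ₙ = d·𝓕ₙ₋₁ + g·𝓕ₙ₋₂`. -/
noncomputable def GFPFC (d g : ℂ → ℂ) : ℕ → ℂ → ℂ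
  | 0 => fun _ => 0
  | 1 => fun _ => 1
  | n + 2 => fun x => d x * GFPFC d g (n + 1) x + g x * GFPFC d g n x

/-- The classical Fibonacci polynomials viewed as functions `ℂ → ℂ`:
`F₀ = 0`, `F₁ = 1`, `Fₙ(x) = x·Fₙ₋₁(x) + Fₙ₋₂(x)`. -/
noncomputable def fibPoly : ℕ → ℂ → ℂ
  | 0 => fun _ => 0
  | 1 => fun _ => 1
  | n + 2 => fun x => x * fibPoly (n + 1) x + fibPoly n x

theorem gfpfc_eq_fibPoly (d g : ℂ → ℂ) (r s : ℂ) (hs : s ≠ 0) (hsg : s ^ 2 = g r)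
    (n : ℕ) (hn : 1 ≤ n) :
    GFPFC d g n r = s ^ (n - 1) * fibPoly n (d r / s) := by
  induction n using Nat.strong_induction_on with
  | _ n ih =>
    match n, hn with
    | 1, _ => simp [GFPFC, fibPoly]
    | 2, _ =>
      simp only [GFPFC, fibPoly]
      field_simp
      rw [show (2:ℕ) - 1 = 1 from rfl]
      ring
    | (m + 3), _ =>
      have h1 := ih (m + 2) (by omega) (by omega)
      have h2 := ih (m + 1) (by omega) (by omega)
      show d r * GFPFC d g (m + 2) r + g r * GFPFC d g (m + 1) r = _
      rw [h1, h2, ← hsg]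
      show _ = s ^ (m + 2) * (d r / s * fibPoly (m + 2) (d r / s) + fibPoly (m + 1) (d r / s))
      rw [show m + 2 - 1 = m + 1 by omega]
      simp only [Nat.add_sub_cancel]
      field_simp
      ring
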